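/- In the quotient description of the twisted de Rham cohomology of the quintic family, the class ω_{ijknms} = (λt x₀⁵)^i(λt x₁⁵)^j(λt x₂⁵)^k(λt x₃⁵)^n(λt x₄⁵)^m (tx)^s dx dt satisfies the s-relation δ ω_{ijknms} = −(s+1) ω_{ijknms} − π ω_{ijknm(s+1)}, where δ = λ∂_λ + π t λ(x₀⁵+...+x₄⁵) and one works modulo the images of the operators ∂_{x_i} + πt(5λx_i⁴ + x₀⋯x̂_i⋯x₄) and ∂_t + πφ_λ, with φ_λ = λ(Σ x_i⁵) + x₀x₁x₂x₃x₄. Algebraically: in the quotient of the polynomial ring K[x₀,...,x₄,t,λ^{±1}] (K a field of characteristic 0 containing π) by the ideal-like subspace spanned by the images of D_i = ∂_{x_i} + π∂_{x_i}(tφ_λ) and D_t = ∂_t + πφ_λ, the operator δ acts on the monomial ω_{ijknms} as stated. -/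

import Mathlib

/-! Expanding `D_t(t f) = ∂_t(t f) + π t φ_λ f` shows that, for every `f`,
`δ f = D_t(t f) - (∂_t(t f) - λ∂_λ f) - π t x f`. Multiplication by `t x` turns
`ω_{ijknms}` into `ω_{ijknm(s+1)}`, and `ω_{ijknms}` is a monomial whose `t`-degree exceeds its
`λ`-degree by exactly `s`, so `∂_t(t ω) - λ∂_λ ω = (s + 1) ω`. -/

/-! The twisted relative de Rham complex for the quintic family: we work in
`L = K[x₀,…,x₄,t][λ^{±1}]`, realized as Laurent polynomials in `λ` over the
multivariate polynomial ring `A = K[x₀,…,x₄,t]` (variables `0,…,4` are `x₀,…,x₄`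
and variable `5` is `t`), modulo the span of the images of the operators
`D_r = ∂_{x_r} + πt(5λx_r⁴ + x₀⋯x̂_r⋯x₄)` and `D_t = ∂_t + πφ_λ`,
where `φ_λ = λ(Σ x_r⁵) + x₀x₁x₂x₃x₄`. -/

noncomputable section

open MvPolynomial
local notation "Cλ" => LaurentPolynomial.C
local notation "Tλ" => LaurentPolynomial.T

variable {K : Type*}

/-- The coefficient ring `A = K[x₀,…,x₄,t]`. -/
abbrev A (K : Type*) [Field K] := MvPolynomial (Fin 6) K

/-- `L = A[λ^{±1}]`. -/
abbrev L (K : Type*) [Field K] := LaurentPolynomial (A K)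

variable [Field K] [CharZero K]

/-- `t`. -/
def tA : A K := X 5
/-- `x = x₀x₁x₂x₃x₄`. -/
def xprod : A K := ∏ r : Fin 5, X r.castSucc
/-- `Σ_r x_r⁵`. -/
def sumx5 : A K := ∑ r : Fin 5, X r.castSucc ^ 5

/-- Partial derivative `∂` (in one of the variables `x₀,…,x₄,t`) extended
coefficientwise to `L`. -/
def pdL (r : Fin 6) (f : L K) : L K :=
  AddMonoidAlgebra.ofCoeff (Finsupp.mapRange (⇑(pderiv r)) (map_zero _) f.coeff)

/-- `λ ∂_λ` on `L`. -/
def lamDlam (f : L K) : L K :=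
  AddMonoidAlgebra.ofCoeff (f.coeff.sum fun n a => Finsupp.single n (n • a))

/-- The operator `D_r = ∂_{x_r} + πt(5λx_r⁴ + x₀⋯x̂_r⋯x₄)`. -/
def Dx (π : K) (r : Fin 5) (f : L K) : L K :=
  pdL r.castSucc f +
    Cλ (MvPolynomial.C π * tA) *
      ((5 : L K) * Tλ 1 * Cλ (X r.castSucc ^ 4) +
        Cλ (∏ j ∈ Finset.univ.erase r, X j.castSucc)) * f

/-- The operator `D_t = ∂_t + πφ_λ` with `φ_λ = λ(Σ x_r⁵) + x₀⋯x₄`. -/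
def Dt (π : K) (f : L K) : L K :=
  pdL 5 f + Cλ (MvPolynomial.C π) * (Tλ 1 * Cλ sumx5 + Cλ xprod) * f

/-- `δ = λ∂_λ + πtλ(Σ x_r⁵)`. -/
def δop (π : K) (f : L K) : L K :=
  lamDlam f + Cλ (MvPolynomial.C π * tA * sumx5) * Tλ 1 * f

/-- The subspace spanned by the images of `D₀, …, D₄` and `D_t`. -/
def N (π : K) : Submodule K (L K) :=
  Submodule.span K ((⋃ r : Fin 5, Set.range (Dx π r)) ∪ Set.range (Dt π))

/-- `ω_{ijknms} = (λtx₀⁵)^i (λtx₁⁵)^j (λtx₂⁵)^k (λtx₃⁵)^n (λtx₄⁵)^m (tx)^s`. -/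
def ωc (i j k n m s : ℕ) : L K :=
  (Tλ 1 * Cλ (tA * X (0 : Fin 5).castSucc ^ 5)) ^ i *
    (Tλ 1 * Cλ (tA * X (1 : Fin 5).castSucc ^ 5)) ^ j *
    (Tλ 1 * Cλ (tA * X (2 : Fin 5).castSucc ^ 5)) ^ k *
    (Tλ 1 * Cλ (tA * X (3 : Fin 5).castSucc ^ 5)) ^ n *
    (Tλ 1 * Cλ (tA * X (4 : Fin 5).castSucc ^ 5)) ^ m *
    Cλ (tA * xprod) ^ s

section

omit [CharZero K]

lemma pdL_C_mul_T (r : Fin 6) (a : A K) (p : ℤ) :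
    pdL r (Cλ a * Tλ p) = Cλ (pderiv r a) * Tλ p := by
  simp only [pdL, ← LaurentPolynomial.single_eq_C_mul_T, AddMonoidAlgebra.coeff_single,
    Finsupp.mapRange_single, AddMonoidAlgebra.ofCoeff_single]

lemma lamDlam_C_mul_T (a : A K) (p : ℤ) :
    lamDlam (Cλ a * Tλ p) = Cλ (p • a) * Tλ p := by
  simp only [lamDlam, ← LaurentPolynomial.single_eq_C_mul_T, AddMonoidAlgebra.coeff_single]
  rw [Finsupp.sum_single_index (by simp), AddMonoidAlgebra.ofCoeff_single]

lemma smul_eq_C_C_mul (c : K) (f : L K) : c • f = Cλ (MvPolynomial.C c) * f := by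
  rw [Algebra.smul_def, LaurentPolynomial.algebraMap_apply, MvPolynomial.algebraMap_eq]

lemma δop_add_eq_Dt (π : K) (f : L K) :
    δop π f + (pdL 5 (Cλ tA * f) - lamDlam f) + π • (Cλ (tA * xprod) * f) =
      Dt π (Cλ tA * f) := by
  simp only [δop, Dt, smul_eq_C_C_mul, map_mul]
  ring

lemma pderiv_last_rename_castSucc {R : Type*} [CommSemiring R] {n : ℕ}
    (q : MvPolynomial (Fin n) R) : pderiv (Fin.last n) (rename Fin.castSucc q) = 0 :=
  pderiv_eq_zero_of_notMem_vars fun h ↦ by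
    obtain ⟨r, -, hr⟩ := mem_vars_rename _ _ h
    exact Fin.castSucc_ne_last r hr

lemma pdL_tA_mul_sub_lamDlam (q : MvPolynomial (Fin 5) K) (d s : ℕ) :
    pdL 5 (Cλ tA * (Cλ (tA ^ (d + s) * rename Fin.castSucc q) * Tλ d)) -
        lamDlam (Cλ (tA ^ (d + s) * rename Fin.castSucc q) * Tλ d) =
      ((s : K) + 1) • (Cλ (tA ^ (d + s) * rename Fin.castSucc q) * Tλ d) := by
  rw [smul_eq_C_C_mul, ← mul_assoc (Cλ _), ← mul_assoc (Cλ _), ← map_mul, ← map_mul, pdL_C_mul_T,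
    lamDlam_C_mul_T, ← sub_mul, ← map_sub]
  congr 2
  have ht : pderiv (5 : Fin 6) (tA : A K) = 1 := pderiv_X_self 5
  have hq : pderiv (5 : Fin 6) (rename Fin.castSucc q) = 0 := pderiv_last_rename_castSucc q
  rw [← mul_assoc, ← pow_succ']
  simp only [Derivation.leibniz, Derivation.leibniz_pow, Nat.add_sub_cancel, hq, ht,
    smul_eq_mul, zsmul_eq_mul, nsmul_eq_mul, map_add, map_one, map_natCast]
  push_cast
  ring

lemma ωc_succ (i j k n m s : ℕ) :
    (ωc i j k n m (s + 1) : L K) = Cλ (tA * xprod) * ωc i j k n m s := by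
  rw [ωc, ωc, pow_succ]
  ring

lemma ωc_eq_C_mul_T (i j k n m s : ℕ) :
    (ωc i j k n m s : L K) = Cλ (tA ^ (i + j + k + n + m + s) * rename Fin.castSucc
      (X 0 ^ (5 * i) * X 1 ^ (5 * j) * X 2 ^ (5 * k) * X 3 ^ (5 * n) * X 4 ^ (5 * m) *
        (∏ r, X r) ^ s)) * Tλ ((i + j + k + n + m : ℕ) : ℤ) := by
  rw [← mul_one ((i + j + k + n + m : ℕ) : ℤ), ← LaurentPolynomial.T_pow]
  simp only [ωc, xprod, map_mul, map_pow, map_prod, rename_X]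
  ring

end

theorem stmt17_general (π : K) (i j k n m s : ℕ) :
    δop π (ωc i j k n m s) + ((s : K) + 1) • (ωc i j k n m s : L K) +
      π • ωc i j k n m (s + 1) ∈ N π := by
  rw [ωc_succ, ωc_eq_C_mul_T, ← pdL_tA_mul_sub_lamDlam, δop_add_eq_Dt]
  exact Submodule.subset_span (Or.inr ⟨_, rfl⟩)

/-- The `s`-relation: modulo the images of the operators `D_r` and `D_t`,
`δ ω_{ijknms} = -(s+1) ω_{ijknms} - π ω_{ijknm(s+1)}`. -/
theorem stmt17 (π : K) (hπ : π ≠ 0) (i j k n m s : ℕ) :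
    δop π (ωc i j k n m s) + ((s : K) + 1) • (ωc i j k n m s : L K) +
      π • ωc i j k n m (s + 1) ∈ N π :=
  stmt17_general π i j k n m s

end
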